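/- There exist real numbers b₀, b₁, b₂, b₃ such that for every n ≥ 7, the matrix B = b₀·I + b₁·S + b₂·S² + b₃·S³ on ℝ^(ℤ/nℤ) satisfies −Bᵀ B = −(9/2)·I + (17/6)·(S + Sᵀ) − (41/60)·(S² + (Sᵀ)²) + (1/10)·(S³ + (Sᵀ)³). -/
import Mathlib


open Matrix

/-- The `n×n` cyclic shift matrix `S` over `ℤ/nℤ` (modelled as `Fin n`):
`S i j = 1` if `i = j + 1 (mod n)`, and `0` otherwise. -/
noncomputable def cycShift (n : ℕ) : Matrix (Fin n) (Fin n) ℝ :=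
  Matrix.of fun i j => if (i : ℕ) = ((j : ℕ) + 1) % n then 1 else 0

lemma cycShift_apply (n : ℕ) (hn : 7 ≤ n) [NeZero n] (i j : Fin n) :
    cycShift n i j = if i = j + 1 then 1 else 0 := by
  have h1 : (1 : ℕ) % n = 1 := Nat.mod_eq_of_lt (by omega)
  have : ((j + 1 : Fin n) : ℕ) = ((j : ℕ) + 1) % n := by
    simp only [Fin.add_def, Fin.val_one', h1]
  simp only [cycShift, Matrix.of_apply, ← this, Fin.val_eq_val]

lemma cycShift_mul_transpose (n : ℕ) (hn : 7 ≤ n) [NeZero n] :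
    cycShift n * (cycShift n)ᵀ = 1 := by
  ext i j
  rw [Matrix.mul_apply]
  simp only [Matrix.transpose_apply, cycShift_apply n hn]
  have hi : ∀ k : Fin n, (i = k + 1) ↔ (k = i - 1) := by
    intro k; constructor <;> intro h <;> simp [h, sub_add_cancel, add_sub_cancel_right]
  have hj : ∀ k : Fin n, (j = k + 1) ↔ (k = j - 1) := by
    intro k; constructor <;> intro h <;> simp [h, sub_add_cancel, add_sub_cancel_right]
  simp only [hi, hj, ite_mul, one_mul, zero_mul]
  rw [Finset.sum_ite_eq' Finset.univ (i-1 : Fin n)]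
  simp [Matrix.one_apply, sub_left_inj, eq_comm]

lemma cycShift_transpose_mul (n : ℕ) (hn : 7 ≤ n) [NeZero n] :
    (cycShift n)ᵀ * cycShift n = 1 := by
  ext i j
  rw [Matrix.mul_apply]
  simp only [Matrix.transpose_apply, cycShift_apply n hn]
  simp only [ite_mul, one_mul, zero_mul]
  rw [Finset.sum_ite_eq' Finset.univ (i+1 : Fin n)]
  simp [Matrix.one_apply, eq_comm]

lemma key_expand {N : Type*} [Fintype N] [DecidableEq N]
    (S T : Matrix N N ℝ) (hTS : T * S = 1)
    (b₀ b₁ b₂ b₃ : ℝ) :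
    (b₀ • (1 : Matrix N N ℝ) + b₁ • T + b₂ • T ^ 2 + b₃ • T ^ 3) *
    (b₀ • (1 : Matrix N N ℝ) + b₁ • S + b₂ • S ^ 2 + b₃ • S ^ 3) =
      (b₀^2 + b₁^2 + b₂^2 + b₃^2) • (1 : Matrix N N ℝ)
      + (b₀*b₁ + b₁*b₂ + b₂*b₃) • (S + T)
      + (b₀*b₂ + b₁*b₃) • (S^2 + T^2)
      + (b₀*b₃) • (S^3 + T^3) := by
  have r11 : T * S = 1 := hTS
  have r12 : T * S ^ 2 = S := by rw [sq, ← mul_assoc, hTS, one_mul]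
  have r13 : T * S ^ 3 = S ^ 2 := by rw [pow_succ', ← mul_assoc, hTS, one_mul]
  have r21 : T ^ 2 * S = T := by rw [sq, mul_assoc, hTS, mul_one]
  have r22 : T ^ 2 * S ^ 2 = 1 := by rw [sq, mul_assoc, r12, hTS]
  have r23 : T ^ 2 * S ^ 3 = S := by rw [sq, mul_assoc, r13, r12]
  have r31 : T ^ 3 * S = T ^ 2 := by rw [pow_succ, mul_assoc, hTS, mul_one]
  have r32 : T ^ 3 * S ^ 2 = T := by rw [pow_succ', mul_assoc T, r22, mul_one]
  have r33 : T ^ 3 * S ^ 3 = 1 := by rw [pow_succ', mul_assoc T, r23, r11]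
  simp only [Matrix.add_mul, Matrix.mul_add, smul_mul_assoc, mul_smul_comm,
    smul_smul, one_mul, mul_one, r11, r12, r13, r21, r22, r23, r31, r32, r33]
  match_scalars <;> ring

lemma scalars : ∃ b₀ b₁ b₂ b₃ : ℝ,
    b₀^2 + b₁^2 + b₂^2 + b₃^2 = 9/2 ∧
    b₀*b₁ + b₁*b₂ + b₂*b₃ = -(17/6) ∧
    b₀*b₂ + b₁*b₃ = 41/60 ∧
    b₀*b₃ = -(1/10) := by
  set f : ℝ → ℝ := fun x => 36 - 564*x - 359*x^2 - 564*x^3 + 36*x^4 with hf_def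
  have hcont : ContinuousOn f (Set.Icc (0:ℝ) 1) := by fun_prop
  have hf : Set.Icc (f 1) (f 0) ⊆ f '' Set.Icc 0 1 :=
    intermediate_value_Icc' (by norm_num) hcont
  have h0mem : (0:ℝ) ∈ Set.Icc (f 1) (f 0) := by
    simp only [hf_def]; norm_num
  obtain ⟨m, hm01, hq⟩ := hf h0mem
  simp only [hf_def] at hq
  have hm0 : 0 < m := by
    rcases lt_or_eq_of_le hm01.1 with h | h
    · exact h
    · exfalso; rw [← h] at hq; norm_num at hq
  set s : ℝ := 29 * m / (6 * (1 + m)) with hs_def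
  have hs : s * (6 * (1 + m)) = 29 * m := by
    rw [hs_def]; field_simp
  set c : ℝ := Real.sqrt (1 / (10 * m)) with hc_def
  have hc2 : c ^ 2 * (10 * m) = 1 := by
    rw [hc_def, Real.sq_sqrt (by positivity)]
    field_simp
  have hw : (36 * (1 + m)^2 : ℝ) ≠ 0 := by positivity
  have hE3 : m^2 + 2*m*s + s^2 + m + 2*s + 1 = 85*m/3 := by
    apply mul_right_cancel₀ hw
    linear_combination ((6 + 6*m)*s + 12 + 53*m + 12*m^2) * hs + hq
  have hE4 : m^2 + (m+s)^2 + (s+1)^2 + 1 = 45*m := by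
    apply mul_right_cancel₀ hw
    linear_combination ((12 + 12*m)*s + 12 + 82*m + 12*m^2) * hs + 2 * hq
  refine ⟨-(c*m), c*(m+s), -(c*(s+1)), c, ?_, ?_, ?_, ?_⟩
  · linear_combination (9/2) * hc2 + c^2 * hE4
  · linear_combination (-(17/6)) * hc2 + (-(c^2)) * hE3
  · linear_combination (41/60) * hc2 + (c^2/6) * hs
  · linear_combination (-(1/10)) * hc2

/-- there exist reals `b₀,b₁,b₂,b₃` such that, for every `n ≥ 7`,
`B = b₀·I + b₁·S + b₂·S² + b₃·S³` satisfies
`−Bᵀ B = −(9/2)·I + (17/6)·(S+Sᵀ) − (41/60)·(S²+(Sᵀ)²) + (1/10)·(S³+(Sᵀ)³)`. -/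
theorem stmt_8 :
    ∃ b₀ b₁ b₂ b₃ : ℝ, ∀ n : ℕ, 7 ≤ n →
      ∀ B : Matrix (Fin n) (Fin n) ℝ,
        B = b₀ • (1 : Matrix (Fin n) (Fin n) ℝ) + b₁ • cycShift n
            + b₂ • (cycShift n) ^ 2 + b₃ • (cycShift n) ^ 3 →
        -(Bᵀ * B) =
          (-(9 / 2) : ℝ) • (1 : Matrix (Fin n) (Fin n) ℝ)
            + (17 / 6 : ℝ) • (cycShift n + (cycShift n)ᵀ)
            - (41 / 60 : ℝ) • ((cycShift n) ^ 2 + ((cycShift n)ᵀ) ^ 2)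
            + (1 / 10 : ℝ) • ((cycShift n) ^ 3 + ((cycShift n)ᵀ) ^ 3) := by
  obtain ⟨b₀, b₁, b₂, b₃, h0, h1, h2, h3⟩ := scalars
  refine ⟨b₀, b₁, b₂, b₃, ?_⟩
  intro n hn B hB
  haveI : NeZero n := ⟨by omega⟩
  have hTS : (cycShift n)ᵀ * cycShift n = 1 := cycShift_transpose_mul n hn
  have hBt : Bᵀ = b₀ • (1 : Matrix (Fin n) (Fin n) ℝ) + b₁ • (cycShift n)ᵀ
      + b₂ • ((cycShift n)ᵀ) ^ 2 + b₃ • ((cycShift n)ᵀ) ^ 3 := by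
    rw [hB]
    simp [Matrix.transpose_add, Matrix.transpose_smul, Matrix.transpose_pow,
      Matrix.transpose_one]
  rw [hBt, hB, key_expand (cycShift n) ((cycShift n)ᵀ) hTS, h0, h1, h2, h3]
  module
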